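/- Let M be a commutative additive monoid, regarded as a module over the semiring ℕ. Then the tensor product 𝔹 ⊗_ℕ M over ℕ has exactly one element if and only if every element of M has an additive inverse. -/
import Mathlib


/-- The Boolean semiring `𝔹 = {0, 1}` with `1 + 1 = 1`: addition is logical
`or` and multiplication is logical `and`. -/
inductive BoolSR : Type
  | zero : BoolSR
  | one : BoolSR
deriving DecidableEq

namespace BoolSR

/-- Addition on `𝔹` is logical `or`. -/
def add : BoolSR → BoolSR → BoolSR
  | zero, b => b
  | one, _ => one

/-- Multiplication on `𝔹` is logical `and`. -/
def mul : BoolSR → BoolSR → BoolSR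
  | zero, _ => zero
  | one, b => b

instance : Zero BoolSR := ⟨zero⟩
instance : One BoolSR := ⟨one⟩
instance : Add BoolSR := ⟨add⟩
instance : Mul BoolSR := ⟨mul⟩

instance : CommSemiring BoolSR where
  add_assoc a b c := by cases a <;> cases b <;> cases c <;> rfl
  zero_add a := by cases a <;> rfl
  add_zero a := by cases a <;> rfl
  add_comm a b := by cases a <;> cases b <;> rfl
  mul_assoc a b c := by cases a <;> cases b <;> cases c <;> rfl
  one_mul a := by cases a <;> rfl
  mul_one a := by cases a <;> rfl
  mul_comm a b := by cases a <;> cases b <;> rfl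
  left_distrib a b c := by cases a <;> cases b <;> cases c <;> rfl
  right_distrib a b c := by cases a <;> cases b <;> cases c <;> rfl
  zero_mul a := rfl
  mul_zero a := by cases a <;> rfl
  nsmul := nsmulRec
  npow := npowRec

end BoolSR

section Aux

open Classical

lemma BoolSR.add_idem (a : BoolSR) : a + a = a := by cases a <;> rfl

variable {M : Type*} [AddCommMonoid M]

/-- invertibility is closed under addition -/
lemma inv_add {m m' : M} (h : ∃ t, m + t = 0) (h' : ∃ t, m' + t = 0) :
    ∃ t, (m + m') + t = 0 := by
  obtain ⟨t, ht⟩ := h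
  obtain ⟨t', ht'⟩ := h'
  exact ⟨t + t', by rw [show m + m' + (t + t') = (m + t) + (m' + t') by abel, ht, ht', add_zero]⟩

lemma inv_of_add_left {m m' : M} (h : ∃ t, (m + m') + t = 0) : ∃ t, m + t = 0 := by
  obtain ⟨t, ht⟩ := h
  exact ⟨m' + t, by rw [← add_assoc, ht]⟩

/-- The inner additive map `m ↦ if m invertible then 0 else b`. -/
noncomputable def innerHom (b : BoolSR) : M →+ BoolSR where
  toFun m := if (∃ t, m + t = 0) then 0 else b
  map_zero' := by simp
  map_add' m m' := by
    by_cases h : ∃ t, m + t = 0 <;> by_cases h' : ∃ t, m' + t = 0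
    · simp [h, h', inv_add h h']
    · have hs : ¬∃ t, (m + m') + t = 0 := fun hs =>
        h' (inv_of_add_left (by rwa [add_comm m m'] at hs))
      simp [h, h', hs]
    · have hs : ¬∃ t, (m + m') + t = 0 := fun hs => h (inv_of_add_left hs)
      simp [h, h', hs]
    · have hs : ¬∃ t, (m + m') + t = 0 := fun hs => h (inv_of_add_left hs)
      simp [h, h', hs, BoolSR.add_idem]

/-- The bilinear map `𝔹 →ₗ M →ₗ 𝔹`. -/
noncomputable def bilin : BoolSR →ₗ[ℕ] M →ₗ[ℕ] BoolSR :=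
  AddMonoidHom.toNatLinearMap
  { toFun := fun b => (innerHom (M := M) b).toNatLinearMap
    map_zero' := by
      ext m
      simp [innerHom, AddMonoidHom.toNatLinearMap]
    map_add' := fun b b' => by
      ext m
      by_cases h : ∃ t, m + t = 0 <;>
        simp [innerHom, AddMonoidHom.toNatLinearMap, h] }

end Aux

/-- For a commutative monoid `M` (equivalently, a module over the semiring
`ℕ`), the tensor product `𝔹 ⊗_ℕ M` has exactly one element if and only if
every element of `M` has an additive inverse. -/
theorem boolSR_tensor_trivial_iff (M : Type*) [AddCommMonoid M] :
    (∀ x y : TensorProduct ℕ BoolSR M, x = y) ↔ (∀ m : M, ∃ m', m + m' = 0) := by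
  constructor
  · intro h m
    by_contra hm
    have := congrArg (TensorProduct.lift (bilin (M := M)))
      (h ((1 : BoolSR) ⊗ₜ[ℕ] m) 0)
    rw [map_zero, TensorProduct.lift.tmul] at this
    simp only [bilin, innerHom, AddMonoidHom.toNatLinearMap, AddMonoidHom.coe_mk,
      ZeroHom.coe_mk, LinearMap.coe_mk, AddHom.coe_mk] at this
    rw [if_neg hm] at this
    exact BoolSR.noConfusion this
  · intro h x y
    suffices hz : ∀ z : TensorProduct ℕ BoolSR M, z = 0 by rw [hz x, hz y]
    intro z
    induction z using TensorProduct.induction_on with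
    | zero => rfl
    | add a b ha hb => rw [ha, hb, add_zero]
    | tmul b m =>
      cases b with
      | zero =>
        show (0 : BoolSR) ⊗ₜ[ℕ] m = 0
        rw [TensorProduct.zero_tmul]
      | one =>
        show (1 : BoolSR) ⊗ₜ[ℕ] m = 0
        obtain ⟨m', hm'⟩ := h m
        have h1 : (1 : BoolSR) ⊗ₜ[ℕ] m + (1 : BoolSR) ⊗ₜ[ℕ] m' = 0 := by
          rw [← TensorProduct.tmul_add, hm', TensorProduct.tmul_zero]
        have h2 : (1 : BoolSR) ⊗ₜ[ℕ] m = (1 : BoolSR) ⊗ₜ[ℕ] m + (1 : BoolSR) ⊗ₜ[ℕ] m := by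
          conv_lhs => rw [show (1 : BoolSR) = 1 + 1 from rfl, TensorProduct.add_tmul]
        have h0 : (0 : TensorProduct ℕ BoolSR M) = (1 : BoolSR) ⊗ₜ[ℕ] m := by
          calc (0 : TensorProduct ℕ BoolSR M)
              = (1 : BoolSR) ⊗ₜ[ℕ] m + (1 : BoolSR) ⊗ₜ[ℕ] m' := h1.symm
            _ = ((1 : BoolSR) ⊗ₜ[ℕ] m + (1 : BoolSR) ⊗ₜ[ℕ] m) + (1 : BoolSR) ⊗ₜ[ℕ] m' := by
                rw [← h2]
            _ = (1 : BoolSR) ⊗ₜ[ℕ] m + ((1 : BoolSR) ⊗ₜ[ℕ] m + (1 : BoolSR) ⊗ₜ[ℕ] m') :=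
                add_assoc _ _ _
            _ = (1 : BoolSR) ⊗ₜ[ℕ] m := by rw [h1, add_zero]
        exact h0.symm
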